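/- arXiv:1007.4980 — 3 statements merged into one kernel-verified Lean document; each statement's English description precedes it below -/
import Mathlib

section
/- Let 1 < q < p be reals, and let g : (0,1] → [0,∞) be a decreasing measurable function with ∫₀¹ g(t) dt = f and g(t) ≤ ((p-1)/p) t^{-1/p} for all t ∈ (0,1]. Then ∫₀¹ g(t)^q dt ≤ Γ f^{(p-q)/(p-1)}, where Γ = ((p-1)/p)^q · p/(p-q). -/
/-! With `ψ = psi p`, one has `∫₀ᵃ ψ = a ^ ((p-1)/p)`, so (as `f ≤ ∫₀¹ ψ = 1`) there is `a ∈ (0,1]`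
with `∫₀ᵃ ψ = f`. Put `y = ψ a` and `k = y ^ (q-1)`. On `(0,a]` we have `g ≤ ψ` and `y ≤ ψ`, whence
`g^q - k g ≤ ψ^q - k ψ`; on `(a,1]` monotonicity gives `g ≤ g a ≤ y`, whence `g^q - k g ≤ 0`.
Integrating, the `k`-terms cancel since both masses equal `f`, so
`∫₀¹ g^q ≤ ∫₀ᵃ ψ^q = Γ a ^ ((p-q)/p) = Γ f ^ ((p-q)/(p-1))`. -/

open MeasureTheory Set

namespace Real

theorem rpow_le_rpow_sub_one_mul {x y q : ℝ} (hx : 0 ≤ x) (hxy : x ≤ y) (hq : 1 ≤ q) :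
    x ^ q ≤ y ^ (q - 1) * x := by
  calc x ^ q = x ^ (q - 1) * x := by
        rw [← rpow_add_one' hx (by linarith), sub_add_cancel]
    _ ≤ y ^ (q - 1) * x := by gcongr

theorem rpow_sub_mul_le_rpow_sub_mul {x y z q : ℝ} (hx : 0 ≤ x) (hxz : x ≤ z) (hy : 0 ≤ y)
    (hyz : y ≤ z) (hq : 1 ≤ q) :
    x ^ q - y ^ (q - 1) * x ≤ z ^ q - y ^ (q - 1) * z := by
  have hgap : 0 ≤ z ^ (q - 1) - y ^ (q - 1) :=
    sub_nonneg.2 (rpow_le_rpow hy hyz (by linarith))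
  calc x ^ q - y ^ (q - 1) * x ≤ (z ^ (q - 1) - y ^ (q - 1)) * x := by
        linarith [rpow_le_rpow_sub_one_mul hx hxz hq]
    _ ≤ (z ^ (q - 1) - y ^ (q - 1)) * z := mul_le_mul_of_nonneg_left hxz hgap
    _ = z ^ q - y ^ (q - 1) * z := by
        rw [sub_mul, ← rpow_add_one' (hx.trans hxz) (by linarith), sub_add_cancel]

end Real

theorem setIntegral_rpow_le_of_level {α : Type*} [MeasurableSpace α] {μ : Measure α}
    {s A : Set α} {g ψ : α → ℝ} {q y : ℝ} (hs : MeasurableSet s) (hA : MeasurableSet A)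
    (hAs : A ⊆ s) (hq : 1 ≤ q) (hy : 0 ≤ y) (hg0 : ∀ x ∈ s, 0 ≤ g x)
    (hgψ : ∀ x ∈ A, g x ≤ ψ x) (hyψ : ∀ x ∈ A, y ≤ ψ x) (hgy : ∀ x ∈ s \ A, g x ≤ y)
    (hg : IntegrableOn g s μ) (hgq : IntegrableOn (fun x => g x ^ q) s μ)
    (hψ : IntegrableOn ψ A μ) (hψq : IntegrableOn (fun x => ψ x ^ q) A μ)
    (hmass : ∫ x in s, g x ∂μ = ∫ x in A, ψ x ∂μ) :
    ∫ x in s, g x ^ q ∂μ ≤ ∫ x in A, ψ x ^ q ∂μ := by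
  set k := y ^ (q - 1)
  have hh : IntegrableOn (fun x => g x ^ q - k * g x) s μ := hgq.sub (hg.const_mul k)
  have hA_le : ∫ x in A, (g x ^ q - k * g x) ∂μ ≤ ∫ x in A, (ψ x ^ q - k * ψ x) ∂μ :=
    setIntegral_mono_on (hh.mono_set hAs) (hψq.sub (hψ.const_mul k)) hA fun x hx =>
      Real.rpow_sub_mul_le_rpow_sub_mul (hg0 x (hAs hx)) (hgψ x hx) hy (hyψ x hx) hq
  have hsA_le : ∫ x in s \ A, (g x ^ q - k * g x) ∂μ ≤ 0 :=
    setIntegral_nonpos (hs.diff hA) fun x hx =>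
      sub_nonpos.2 (Real.rpow_le_rpow_sub_one_mul (hg0 x hx.1) (hgy x hx) hq)
  have hsplit := integral_inter_add_sdiff hA hh
  rw [inter_eq_right.2 hAs] at hsplit
  rw [integral_sub hgq (hg.const_mul k), integral_const_mul, hmass] at hsplit
  rw [integral_sub hψq (hψ.const_mul k), integral_const_mul] at hA_le
  linarith

theorem setIntegral_rpow_eq_zero_of_setIntegral_eq_zero {α : Type*} [MeasurableSpace α]
    {μ : Measure α} {s : Set α} {g : α → ℝ} {q : ℝ} (hs : MeasurableSet s) (hq : q ≠ 0)
    (hg0 : ∀ x ∈ s, 0 ≤ g x) (hg : IntegrableOn g s μ) (hzero : ∫ x in s, g x ∂μ = 0) :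
    ∫ x in s, g x ^ q ∂μ = 0 := by
  have hgz : g =ᵐ[μ.restrict s] 0 :=
    (integral_eq_zero_iff_of_nonneg_ae (ae_restrict_of_forall_mem hs hg0) hg).1 hzero
  rw [integral_congr_ae (g := fun _ => (0 : ℝ)), integral_zero]
  filter_upwards [hgz] with x hx
  rw [hx, Pi.zero_apply, Real.zero_rpow hq]

theorem integrableOn_rpow_Ioc {r b : ℝ} (hr : -1 < r) (hb : 0 ≤ b) :
    IntegrableOn (fun t : ℝ => t ^ r) (Ioc 0 b) :=
  (intervalIntegrable_iff_integrableOn_Ioc_of_le hb).1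
    (intervalIntegral.intervalIntegrable_rpow' hr)

theorem integral_rpow_Ioc {r b : ℝ} (hr : -1 < r) (hb : 0 ≤ b) :
    ∫ t in Ioc 0 b, t ^ r = b ^ (r + 1) / (r + 1) := by
  rw [← intervalIntegral.integral_of_le hb, integral_rpow (Or.inl hr),
    Real.zero_rpow (by linarith), sub_zero]

noncomputable def psi (p t : ℝ) : ℝ := (p - 1) / p * t ^ (-1 / p)

section psi

variable {p q : ℝ}

theorem neg_one_lt_neg_div (hp : 0 < p) (hqp : q < p) : -1 < -q / p := by
  rwa [neg_div, neg_lt_neg_iff, div_lt_one hp]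

theorem psi_rpow (hp : 1 ≤ p) {t : ℝ} (ht : 0 ≤ t) (q : ℝ) :
    psi p t ^ q = ((p - 1) / p) ^ q * t ^ (-q / p) := by
  rw [psi, Real.mul_rpow (by positivity) (Real.rpow_nonneg ht _), ← Real.rpow_mul ht]
  ring_nf

theorem antitoneOn_psi (hp : 1 ≤ p) : AntitoneOn (psi p) (Ioi 0) := fun s hs t _ hst =>
  mul_le_mul_of_nonneg_left (Real.rpow_le_rpow_of_nonpos hs hst
    (div_nonpos_of_nonpos_of_nonneg (by norm_num) (by linarith))) (by positivity)

theorem integrableOn_psi_rpow (hp : 1 ≤ p) (hqp : q < p) :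
    IntegrableOn (fun t => psi p t ^ q) (Ioc 0 1) := by
  have hr : -1 < -q / p := neg_one_lt_neg_div (by linarith) hqp
  exact IntegrableOn.congr_fun ((integrableOn_rpow_Ioc hr zero_le_one).const_mul _)
    (fun t ht => (psi_rpow hp ht.1.le q).symm) measurableSet_Ioc

theorem integral_psi_rpow_Ioc (hp : 1 ≤ p) (hqp : q < p) {a : ℝ} (ha : 0 ≤ a) :
    ∫ t in Ioc 0 a, psi p t ^ q = ((p - 1) / p) ^ q * (p / (p - q)) * a ^ ((p - q) / p) := by
  have hr : -1 < -q / p := neg_one_lt_neg_div (by linarith) hqp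
  rw [setIntegral_congr_fun measurableSet_Ioc (fun t ht => psi_rpow hp ht.1.le q),
    integral_const_mul, integral_rpow_Ioc hr ha]
  have hp0 : p ≠ 0 := by linarith
  have hpq : p - q ≠ 0 := by linarith
  have he : -q / p + 1 = (p - q) / p := by field_simp; ring
  rw [he]
  field_simp

theorem integral_psi_Ioc (hp : 1 < p) {a : ℝ} (ha : 0 ≤ a) :
    ∫ t in Ioc 0 a, psi p t = a ^ ((p - 1) / p) := by
  have := integral_psi_rpow_Ioc hp.le hp ha
  simp only [Real.rpow_one] at this
  have hp0 : p ≠ 0 := by linarith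
  have hp1 : p - 1 ≠ 0 := by linarith
  rw [this]
  field_simp

theorem integrableOn_rpow_of_le_psi (hp : 1 ≤ p) (hq : 0 ≤ q) (hqp : q < p) {g : ℝ → ℝ}
    (hgm : Measurable g) (hg0 : ∀ t ∈ Ioc (0 : ℝ) 1, 0 ≤ g t)
    (hle : ∀ t ∈ Ioc (0 : ℝ) 1, g t ≤ psi p t) :
    IntegrableOn (fun t => g t ^ q) (Ioc 0 1) := by
  refine (integrableOn_psi_rpow hp hqp).mono' (hgm.pow_const q).aestronglyMeasurable
    (ae_restrict_of_forall_mem measurableSet_Ioc fun t ht => ?_)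
  rw [Real.norm_of_nonneg (Real.rpow_nonneg (hg0 t ht) q)]
  exact Real.rpow_le_rpow (hg0 t ht) (hle t ht) hq

theorem integrableOn_psi (hp : 1 < p) : IntegrableOn (psi p) (Ioc 0 1) := by
  simpa using integrableOn_psi_rpow (q := 1) hp.le hp

theorem setIntegral_rpow_le_setIntegral_psi_rpow (hq : 1 ≤ q) (hqp : q < p) {g : ℝ → ℝ}
    (hgm : Measurable g) (hg0 : ∀ t ∈ Ioc (0 : ℝ) 1, 0 ≤ g t)
    (hdec : AntitoneOn g (Ioc 0 1)) (hle : ∀ t ∈ Ioc (0 : ℝ) 1, g t ≤ psi p t)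
    {a : ℝ} (ha : a ∈ Ioc (0 : ℝ) 1) (hmass : ∫ t in Ioc 0 1, g t = ∫ t in Ioc 0 a, psi p t) :
    ∫ t in Ioc 0 1, g t ^ q ≤ ∫ t in Ioc 0 a, psi p t ^ q := by
  have hp : 1 < p := hq.trans_lt hqp
  have hAs : Ioc 0 a ⊆ Ioc (0 : ℝ) 1 := Ioc_subset_Ioc_right ha.2
  refine setIntegral_rpow_le_of_level measurableSet_Ioc measurableSet_Ioc hAs hq
    ((hg0 a ha).trans (hle a ha)) hg0 (fun t ht => hle t (hAs ht))
    (fun t ht => antitoneOn_psi hp.le ht.1 ha.1 ht.2) (fun t ht => ?_) ?_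
    (integrableOn_rpow_of_le_psi hp.le (by linarith) hqp hgm hg0 hle)
    ((integrableOn_psi hp).mono_set hAs) ((integrableOn_psi_rpow hp.le hqp).mono_set hAs) hmass
  · have hat : a ≤ t := le_of_lt (not_le.1 fun h => ht.2 ⟨ht.1.1, h⟩)
    exact (hdec ha ht.1 hat).trans (hle a ha)
  · simpa using integrableOn_rpow_of_le_psi hp.le zero_le_one hp hgm hg0 hle

end psi

theorem stmt_2 (p q : ℝ) (hq : 1 < q) (hqp : q < p)
    (g : ℝ → ℝ) (hgm : Measurable g)
    (hg0 : ∀ t ∈ Set.Ioc (0:ℝ) 1, 0 ≤ g t)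
    (hdec : AntitoneOn g (Set.Ioc (0:ℝ) 1))
    (hle : ∀ t ∈ Set.Ioc (0:ℝ) 1, g t ≤ ((p - 1) / p) * t ^ (-(1:ℝ)/p))
    (f : ℝ) (hf : ∫ t in Set.Ioc (0:ℝ) 1, g t = f) :
    ∫ t in Set.Ioc (0:ℝ) 1, (g t) ^ q ≤
      (((p - 1) / p) ^ q * (p / (p - q))) * f ^ ((p - q) / (p - 1)) := by
  have hp : 1 < p := hq.trans hqp
  have hg : IntegrableOn g (Ioc 0 1) := by
    simpa using integrableOn_rpow_of_le_psi (p := p) hp.le zero_le_one hp hgm hg0 hle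
  have hf0 : 0 ≤ f := hf ▸ setIntegral_nonneg measurableSet_Ioc hg0
  rcases hf0.eq_or_lt with rfl | hfpos
  · rw [setIntegral_rpow_eq_zero_of_setIntegral_eq_zero measurableSet_Ioc (by linarith) hg0 hg hf,
      Real.zero_rpow (div_ne_zero (by linarith) (by linarith)), mul_zero]
  have hf1 : f ≤ 1 := by
    have := setIntegral_mono_on hg (integrableOn_psi hp) measurableSet_Ioc hle
    rwa [hf, integral_psi_Ioc hp zero_le_one, Real.one_rpow] at this
  have hp0 : p ≠ 0 := by linarith
  have hp1 : p - 1 ≠ 0 := by linarith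
  set a := f ^ (p / (p - 1))
  have haf : a ^ ((p - 1) / p) = f := by
    rw [← Real.rpow_mul hf0, show p / (p - 1) * ((p - 1) / p) = 1 by field_simp, Real.rpow_one]
  have ha : a ∈ Ioc (0 : ℝ) 1 :=
    ⟨Real.rpow_pos_of_pos hfpos _, Real.rpow_le_one hf0 hf1 (div_pos (by linarith) (by linarith)).le⟩
  calc ∫ t in Ioc 0 1, g t ^ q ≤ ∫ t in Ioc 0 a, psi p t ^ q :=
        setIntegral_rpow_le_setIntegral_psi_rpow hq.le hqp hgm hg0 hdec hle ha
          (by rw [hf, integral_psi_Ioc hp ha.1.le, haf])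
    _ = ((p - 1) / p) ^ q * (p / (p - q)) * a ^ ((p - q) / p) :=
        integral_psi_rpow_Ioc hp.le hqp ha.1.le
    _ = ((p - 1) / p) ^ q * (p / (p - q)) * f ^ ((p - q) / (p - 1)) := by
        rw [← Real.rpow_mul hf0, show p / (p - 1) * ((p - q) / p) = (p - q) / (p - 1) by field_simp]
end

section
/- Let 1 < q < p and (p-1)/p < f ≤ 1. Set c = (p(1-f))^{p/(p-1)}, and define g₂ : (0,1] → [0,∞) by g₂(t) = ((p-1)/p) c^{-1/p} for t ∈ (0,c] and g₂(t) = ((p-1)/p) t^{-1/p} for t ∈ (c,1]. Then ∫₀¹ g₂(t) dt = f and ∫₀¹ g₂(t)^q dt = ((p-1)/p)^q · (1/(p-q)) · (p - q·(p(1-f))^{(p-q)/(p-1)}). -/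
open MeasureTheory Set

/-!
With `a = (p - 1)/p`, the function `g₂ ^ s` is the constant `a ^ s * c ^ (-s/p)` on `(0, c]` and
`a ^ s * t ^ (-s/p)` on `(c, 1]`, integrable there because `s < p`. Adding the two pieces gives
`∫₀¹ g₂ ^ s = a ^ s / (p - s) * (p - s * c ^ ((p - s)/p))` for every `s < p`, and
`c ^ ((p - s)/p) = (p (1 - f)) ^ ((p - s)/(p - 1))`. Taking `s = 1` gives `f`, and `s = q`
gives the second formula.
-/

theorem setIntegral_Ioc_ite_const_mul_rpow {c K A r : ℝ} (hc0 : 0 ≤ c) (hc1 : c ≤ 1)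
    (hr : -1 < r) :
    ∫ t in Ioc (0:ℝ) 1, (if t ≤ c then K else A * t ^ r) =
      c * K + A * ((1 - c ^ (r + 1)) / (r + 1)) := by
  set g : ℝ → ℝ := fun t => if t ≤ c then K else A * t ^ r
  have hg_left : EqOn (fun _ => K) g (Ioc 0 c) := fun t ht => (if_pos ht.2).symm
  have hg_right : EqOn (fun t => A * t ^ r) g (Ioc c 1) := fun t ht => (if_neg (not_le.2 ht.1)).symm
  have hint_left : IntegrableOn g (Ioc 0 c) :=
    (integrableOn_const (by simp [Real.volume_Ioc])).congr_fun hg_left measurableSet_Ioc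
  have hint_right : IntegrableOn g (Ioc c 1) := by
    refine IntegrableOn.congr_fun ?_ hg_right measurableSet_Ioc
    rw [← intervalIntegrable_iff_integrableOn_Ioc_of_le hc1]
    exact (intervalIntegral.intervalIntegrable_rpow' hr).const_mul A
  rw [← Ioc_union_Ioc_eq_Ioc hc0 hc1,
    setIntegral_union (Ioc_disjoint_Ioc_of_le le_rfl) measurableSet_Ioc hint_left hint_right,
    ← setIntegral_congr_fun measurableSet_Ioc hg_left,
    ← setIntegral_congr_fun measurableSet_Ioc hg_right, setIntegral_const,
    Real.volume_real_Ioc_of_le hc0, smul_eq_mul, sub_zero,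
    ← intervalIntegral.integral_of_le hc1, intervalIntegral.integral_const_mul,
    integral_rpow (Or.inl hr), Real.one_rpow]

theorem setIntegral_Ioc_truncated_rpow_rpow {a c p s : ℝ} (ha : 0 ≤ a) (hc0 : 0 ≤ c)
    (hc1 : c ≤ 1) (hp : 0 < p) (hsp : s < p) :
    ∫ t in Ioc (0:ℝ) 1, (if t ≤ c then a * c ^ (-1/p) else a * t ^ (-1/p)) ^ s =
      a ^ s / (p - s) * (p - s * c ^ ((p - s) / p)) := by
  have hpow : ∀ x, 0 ≤ x → (a * x ^ (-1/p)) ^ s = a ^ s * x ^ (-s/p) := fun x hx => by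
    rw [Real.mul_rpow ha (Real.rpow_nonneg hx _), ← Real.rpow_mul hx]
    ring_nf
  have hr : -1 < -s/p := by
    rw [neg_div, neg_lt_neg_iff]
    exact (div_lt_one hp).2 hsp
  have hexp : -s/p + 1 = (p - s) / p := by field_simp; ring
  have hc_mul : c * c ^ (-s/p) = c ^ ((p - s) / p) := by
    rw [← hexp, Real.rpow_add' hc0 (by rw [hexp]; exact (div_pos (by linarith) hp).ne'),
      Real.rpow_one, mul_comm]
  calc ∫ t in Ioc (0:ℝ) 1, (if t ≤ c then a * c ^ (-1/p) else a * t ^ (-1/p)) ^ s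
      = ∫ t in Ioc (0:ℝ) 1, (if t ≤ c then a ^ s * c ^ (-s/p) else a ^ s * t ^ (-s/p)) := by
        refine setIntegral_congr_fun measurableSet_Ioc fun t ht => ?_
        split_ifs
        · exact hpow c hc0
        · exact hpow t ht.1.le
    _ = c * (a ^ s * c ^ (-s/p)) + a ^ s * ((1 - c ^ (-s/p + 1)) / (-s/p + 1)) :=
        setIntegral_Ioc_ite_const_mul_rpow hc0 hc1 hr
    _ = a ^ s / (p - s) * (p - s * c ^ ((p - s) / p)) := by
        rw [← mul_assoc, mul_comm c, mul_assoc, hc_mul, hexp]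
        field_simp [(by linarith : p - s ≠ 0)]
        ring

theorem stmt_4 (p q : ℝ) (hq : 1 < q) (hqp : q < p)
    (f : ℝ) (hf0 : (p - 1) / p < f) (hf1 : f ≤ 1)
    (c : ℝ) (hc : c = (p * (1 - f)) ^ (p / (p - 1)))
    (g₂ : ℝ → ℝ)
    (hg₂ : ∀ t : ℝ, g₂ t =
      if t ≤ c then ((p - 1) / p) * c ^ (-(1:ℝ)/p)
      else ((p - 1) / p) * t ^ (-(1:ℝ)/p)) :
    (∫ t in Set.Ioc (0:ℝ) 1, g₂ t = f) ∧
    (∫ t in Set.Ioc (0:ℝ) 1, (g₂ t) ^ q =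
      ((p - 1) / p) ^ q * (1 / (p - q)) *
        (p - q * (p * (1 - f)) ^ ((p - q) / (p - 1)))) := by
  have hp1 : 1 < p := hq.trans hqp
  have hp0 : 0 < p := by linarith
  set b := p * (1 - f) with hb
  have hb0 : 0 ≤ b := mul_nonneg hp0.le (by linarith)
  have hb1 : b < 1 := by
    have := (div_lt_iff₀ hp0).1 hf0
    linarith
  have hc0 : 0 ≤ c := hc ▸ Real.rpow_nonneg hb0 _
  have hc1 : c ≤ 1 := hc ▸ Real.rpow_le_one hb0 hb1.le (div_pos hp0 (by linarith)).le
  have hcb : ∀ s, c ^ ((p - s) / p) = b ^ ((p - s) / (p - 1)) := fun s => by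
    rw [hc, ← Real.rpow_mul hb0]
    field_simp
  have key : ∀ s < p, ∫ t in Ioc (0:ℝ) 1, g₂ t ^ s =
      ((p - 1) / p) ^ s / (p - s) * (p - s * b ^ ((p - s) / (p - 1))) := fun s hs => by
    simp only [hg₂, ← hcb]
    exact setIntegral_Ioc_truncated_rpow_rpow (div_pos (by linarith) hp0).le hc0 hc1 hp0 hs
  refine ⟨?_, by rw [key q hqp]; ring⟩
  have h1 := key 1 hp1
  simp only [Real.rpow_one, one_mul, div_self (by linarith : p - 1 ≠ 0)] at h1
  rw [h1, hb]
  field_simp [(by linarith : p - 1 ≠ 0)]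
  ring
end

section
/- Let 1 < q < p and (p-1)/p < f ≤ 1. If g : (0,1] → [0,∞) is measurable with g(t) ≤ ((p-1)/p) t^{-1/p} for all t ∈ (0,1] and ∫₀¹ g(t) dt = f, then ∫₀¹ g(t)^q dt ≥ ((p-1)/p)^q · (1/(p-q)) · (p - q·(p(1-f))^{(p-q)/(p-1)}). -/
/-!
Write `ψ t = c t^r` with `c = (p-1)/p`, `r = -1/p`, so that `∫₀¹ ψ = 1`. The minimiser of
`∫ g^q` under `0 ≤ g ≤ ψ`, `∫ g = f` is the truncation `m = min ψ (ψ s)`, with `s` chosen so that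
`∫ m = f`, i.e. `s^{(p-1)/p} = p(1-f)`. Convexity of `x ↦ x^q` gives pointwise
`g^q ≥ m^q + q ψ(s)^{q-1} (g - m)`: where `m = ψ(s)` this is the tangent line at `ψ(s)`, and where
`m = ψ < ψ(s)` the tangent at `ψ` has smaller slope while `g - ψ ≤ 0`. Integrating,
`∫ g^q ≥ ∫ m^q`, which is the stated bound. For `f = 1` nothing is truncated: `g = ψ` a.e.
-/

open MeasureTheory Set Real

lemma rpow_tangent_le {q a b : ℝ} (hq : 1 ≤ q) (ha : 0 ≤ a) (hb : 0 < b) :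
    b ^ q + q * b ^ (q - 1) * (a - b) ≤ a ^ q := by
  have hbern := one_add_mul_self_le_rpow_one_add (s := a / b - 1)
    (by linarith [div_nonneg ha hb.le]) hq
  rw [add_sub_cancel, div_rpow ha hb.le] at hbern
  have hbq : 0 < b ^ q := rpow_pos_of_pos hb q
  calc b ^ q + q * b ^ (q - 1) * (a - b) = b ^ q * (1 + q * (a / b - 1)) := by
        rw [rpow_sub_one hb.ne']; field_simp
    _ ≤ b ^ q * (a ^ q / b ^ q) := mul_le_mul_of_nonneg_left hbern hbq.le
    _ = a ^ q := mul_div_cancel₀ _ hbq.ne'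

lemma min_rpow_add_mul_sub_le_rpow {q a y l : ℝ} (hq : 1 ≤ q) (ha : 0 ≤ a) (hay : a ≤ y)
    (hy : 0 < y) (hl : 0 < l) :
    min y l ^ q + q * l ^ (q - 1) * (a - min y l) ≤ a ^ q := by
  rcases le_total y l with hyl | hly
  · rw [min_eq_left hyl]
    have hslope : q * y ^ (q - 1) ≤ q * l ^ (q - 1) :=
      mul_le_mul_of_nonneg_left (rpow_le_rpow hy.le hyl (by linarith)) (by linarith)
    nlinarith [rpow_tangent_le hq ha hy]
  · rw [min_eq_right hly]
    exact rpow_tangent_le hq ha hl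

lemma integral_min_rpow_le_integral_rpow {α : Type*} [MeasurableSpace α] {ν : Measure α}
    {g ψ : α → ℝ} {q l : ℝ} (hq : 1 ≤ q) (hl : 0 < l) (hg0 : ∀ᵐ x ∂ν, 0 ≤ g x)
    (hgψ : ∀ᵐ x ∂ν, g x ≤ ψ x) (hψ : ∀ᵐ x ∂ν, 0 < ψ x) (hg : Integrable g ν)
    (hm : Integrable (fun x => min (ψ x) l) ν) (hmq : Integrable (fun x => min (ψ x) l ^ q) ν)
    (hgq : Integrable (fun x => g x ^ q) ν) (hint : ∫ x, min (ψ x) l ∂ν ≤ ∫ x, g x ∂ν) :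
    ∫ x, min (ψ x) l ^ q ∂ν ≤ ∫ x, g x ^ q ∂ν := by
  have hslope : 0 ≤ q * l ^ (q - 1) := by positivity
  have hlin : Integrable (fun x => q * l ^ (q - 1) * (g x - min (ψ x) l)) ν :=
    (hg.sub hm).const_mul _
  calc ∫ x, min (ψ x) l ^ q ∂ν
      ≤ ∫ x, min (ψ x) l ^ q ∂ν
          + q * l ^ (q - 1) * (∫ x, g x ∂ν - ∫ x, min (ψ x) l ∂ν) :=
        le_add_of_nonneg_right (mul_nonneg hslope (sub_nonneg.2 hint))
    _ = ∫ x, (min (ψ x) l ^ q + q * l ^ (q - 1) * (g x - min (ψ x) l)) ∂ν := by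
        rw [integral_add hmq hlin, integral_const_mul, integral_sub hg hm]
    _ ≤ ∫ x, g x ^ q ∂ν := integral_mono_ae (hmq.add hlin) hgq <| by
        filter_upwards [hg0, hgψ, hψ] with x h0 h1 h2
        exact min_rpow_add_mul_sub_le_rpow hq h0 h1 h2 hl

lemma min_mul_rpow_rpow {c x y r q : ℝ} (hc : 0 ≤ c) (hx : 0 ≤ x) (hy : 0 ≤ y) (hq : 0 ≤ q) :
    min (c * x ^ r) (c * y ^ r) ^ q = c ^ q * min (x ^ (r * q)) (y ^ (r * q)) := by
  rw [← mul_min_of_nonneg _ _ hc, mul_rpow hc (by positivity), rpow_mul hx, rpow_mul hy]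
  congr 1
  rcases le_total (x ^ r) (y ^ r) with h | h
  · rw [min_eq_left h, min_eq_left (rpow_le_rpow (by positivity) h hq)]
  · rw [min_eq_right h, min_eq_right (rpow_le_rpow (by positivity) h hq)]

lemma integral_Ioc_rpow {r a b : ℝ} (hr : -1 < r) (hab : a ≤ b) :
    ∫ t in Ioc a b, t ^ r = (b ^ (r + 1) - a ^ (r + 1)) / (r + 1) := by
  rw [← intervalIntegral.integral_of_le hab, integral_rpow (Or.inl hr)]

lemma integrableOn_Ioc_zero_one_rpow_of_le {g : ℝ → ℝ} {c r q : ℝ} (hg : Measurable g)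
    (hc : 0 ≤ c) (hq : 0 ≤ q) (hrq : -1 < r * q) (hg0 : ∀ t ∈ Ioc (0 : ℝ) 1, 0 ≤ g t)
    (hle : ∀ t ∈ Ioc (0 : ℝ) 1, g t ≤ c * t ^ r) :
    IntegrableOn (fun t => g t ^ q) (Ioc 0 1) := by
  have hbound : IntegrableOn (fun t : ℝ => c ^ q * t ^ (r * q)) (Ioc 0 1) :=
    ((intervalIntegrable_iff_integrableOn_Ioc_of_le zero_le_one).1
      (intervalIntegral.intervalIntegrable_rpow' hrq)).const_mul _
  refine hbound.mono' (by fun_prop) ((ae_restrict_iff' measurableSet_Ioc).2 ?_)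
  refine ae_of_all _ fun t ht => ?_
  rw [norm_of_nonneg (rpow_nonneg (hg0 t ht) q), rpow_mul ht.1.le,
    ← mul_rpow hc (rpow_nonneg ht.1.le r)]
  exact rpow_le_rpow (hg0 t ht) (hle t ht) hq

lemma integrableOn_Ioc_zero_one_of_le {g : ℝ → ℝ} {c r : ℝ} (hg : Measurable g) (hc : 0 ≤ c)
    (hr : -1 < r) (hg0 : ∀ t ∈ Ioc (0 : ℝ) 1, 0 ≤ g t)
    (hle : ∀ t ∈ Ioc (0 : ℝ) 1, g t ≤ c * t ^ r) : IntegrableOn g (Ioc 0 1) := by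
  simpa only [rpow_one] using
    integrableOn_Ioc_zero_one_rpow_of_le hg hc zero_le_one (by rwa [mul_one]) hg0 hle

lemma integral_Ioc_zero_one_mul_rpow_rpow {c r q : ℝ} (hc : 0 ≤ c) (hrq : -1 < r * q) :
    ∫ t in Ioc 0 1, (c * t ^ r) ^ q = c ^ q / (r * q + 1) := by
  rw [setIntegral_congr_fun measurableSet_Ioc fun t ht => by
      rw [mul_rpow hc (rpow_nonneg ht.1.le r), ← rpow_mul ht.1.le],
    integral_const_mul, integral_Ioc_rpow hrq zero_le_one, one_rpow,
    zero_rpow (by linarith), sub_zero, mul_one_div]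

lemma integral_Ioc_zero_one_min_rpow {r s : ℝ} (hr : -1 < r) (hr0 : r ≤ 0) (hs0 : 0 < s)
    (hs1 : s ≤ 1) :
    ∫ t in Ioc 0 1, min (t ^ r) (s ^ r) = s ^ (r + 1) + (1 - s ^ (r + 1)) / (r + 1) := by
  have hlow : EqOn (fun t => min (t ^ r) (s ^ r)) (fun _ => s ^ r) (Ioc 0 s) := fun t ht =>
    min_eq_right (rpow_le_rpow_of_nonpos ht.1 ht.2 hr0)
  have hhigh : EqOn (fun t => min (t ^ r) (s ^ r)) (fun t => t ^ r) (Ioc s 1) := fun t ht =>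
    min_eq_left (rpow_le_rpow_of_nonpos hs0 ht.1.le hr0)
  have hint_low : IntegrableOn (fun t => min (t ^ r) (s ^ r)) (Ioc 0 s) :=
    (integrableOn_const measure_Ioc_lt_top.ne).congr_fun hlow.symm measurableSet_Ioc
  have hint_high : IntegrableOn (fun t => min (t ^ r) (s ^ r)) (Ioc s 1) :=
    ((intervalIntegrable_iff_integrableOn_Ioc_of_le hs1).1
      (intervalIntegral.intervalIntegrable_rpow' hr)).congr_fun hhigh.symm measurableSet_Ioc
  rw [← Ioc_union_Ioc_eq_Ioc hs0.le hs1, setIntegral_union (Ioc_disjoint_Ioc_of_le le_rfl)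
    measurableSet_Ioc hint_low hint_high, setIntegral_congr_fun measurableSet_Ioc hlow,
    setIntegral_congr_fun measurableSet_Ioc hhigh, setIntegral_const, integral_Ioc_rpow hr hs1,
    smul_eq_mul, measureReal_def, Real.volume_Ioc, ENNReal.toReal_ofReal (by linarith), sub_zero,
    one_rpow, rpow_add_one hs0.ne', mul_comm]

lemma integral_Ioc_zero_one_min_mul_rpow_rpow {c r q s : ℝ} (hc : 0 ≤ c) (hq : 0 ≤ q)
    (hrq : -1 < r * q) (hr0 : r ≤ 0) (hs0 : 0 < s) (hs1 : s ≤ 1) :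
    ∫ t in Ioc 0 1, min (c * t ^ r) (c * s ^ r) ^ q
      = c ^ q * (s ^ (r * q + 1) + (1 - s ^ (r * q + 1)) / (r * q + 1)) := by
  rw [setIntegral_congr_fun measurableSet_Ioc fun t ht =>
      min_mul_rpow_rpow (r := r) hc ht.1.le hs0.le hq, integral_const_mul,
    integral_Ioc_zero_one_min_rpow hrq (mul_nonpos_of_nonpos_of_nonneg hr0 hq) hs0 hs1]

section RpowBound

variable {g : ℝ → ℝ} {c r q : ℝ}

lemma integral_rpow_eq_of_le_mul_rpow_of_integral_eq (hgm : Measurable g) (hc : 0 ≤ c)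
    (hr : -1 < r) (hrq : -1 < r * q) (hg0 : ∀ t ∈ Ioc (0 : ℝ) 1, 0 ≤ g t)
    (hle : ∀ t ∈ Ioc (0 : ℝ) 1, g t ≤ c * t ^ r)
    (hint : ∫ t in Ioc (0 : ℝ) 1, g t = c / (r + 1)) :
    ∫ t in Ioc (0 : ℝ) 1, g t ^ q = c ^ q / (r * q + 1) := by
  have hψ : IntegrableOn (fun t => c * t ^ r) (Ioc 0 1) :=
    integrableOn_Ioc_zero_one_of_le (by fun_prop) hc hr
      (fun t ht => by have := ht.1; positivity) fun _ _ => le_rfl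
  have hg_eq : g =ᵐ[volume.restrict (Ioc 0 1)] fun t => c * t ^ r := by
    refine (integral_eq_iff_of_ae_le (integrableOn_Ioc_zero_one_of_le hgm hc hr hg0 hle) hψ
      (ae_restrict_of_forall_mem measurableSet_Ioc hle)).1 ?_
    have hψint := integral_Ioc_zero_one_mul_rpow_rpow (r := r) (q := 1) hc (by rwa [mul_one])
    simp only [rpow_one, mul_one] at hψint
    rw [hint, hψint]
  rw [integral_congr_ae (hg_eq.mono fun t ht => congrArg (· ^ q) ht),
    integral_Ioc_zero_one_mul_rpow_rpow hc hrq]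

/-- The two sides of `hint` and the left side of the conclusion are `∫ min ψ (ψ s)` and
`∫ (min ψ (ψ s)) ^ q` for `ψ t = c * t ^ r`. -/
lemma le_integral_rpow_of_le_mul_rpow (hgm : Measurable g) (hc : 0 < c) (hr : -1 < r)
    (hr0 : r ≤ 0) (hq : 1 ≤ q) (hrq : -1 < r * q) {s : ℝ} (hs0 : 0 < s) (hs1 : s ≤ 1)
    (hg0 : ∀ t ∈ Ioc (0 : ℝ) 1, 0 ≤ g t) (hle : ∀ t ∈ Ioc (0 : ℝ) 1, g t ≤ c * t ^ r)
    (hint : c * (s ^ (r + 1) + (1 - s ^ (r + 1)) / (r + 1)) ≤ ∫ t in Ioc (0 : ℝ) 1, g t) :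
    c ^ q * (s ^ (r * q + 1) + (1 - s ^ (r * q + 1)) / (r * q + 1))
      ≤ ∫ t in Ioc (0 : ℝ) 1, g t ^ q := by
  have hl : 0 < c * s ^ r := by positivity
  have hψ0 : ∀ t ∈ Ioc (0 : ℝ) 1, 0 < c * t ^ r := fun t ht => by have := ht.1; positivity
  have hm0 : ∀ t ∈ Ioc (0 : ℝ) 1, 0 ≤ min (c * t ^ r) (c * s ^ r) := fun t ht =>
    le_min (hψ0 t ht).le hl.le
  have hmψ : ∀ t ∈ Ioc (0 : ℝ) 1, min (c * t ^ r) (c * s ^ r) ≤ c * t ^ r := fun _ _ =>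
    min_le_left _ _
  have hm := integral_Ioc_zero_one_min_mul_rpow_rpow hc.le zero_le_one (by rwa [mul_one]) hr0
    hs0 hs1
  simp only [rpow_one, mul_one] at hm
  rw [← integral_Ioc_zero_one_min_mul_rpow_rpow hc.le (by linarith) hrq hr0 hs0 hs1]
  exact integral_min_rpow_le_integral_rpow hq hl
    (ae_restrict_of_forall_mem measurableSet_Ioc hg0)
    (ae_restrict_of_forall_mem measurableSet_Ioc hle)
    (ae_restrict_of_forall_mem measurableSet_Ioc hψ0)
    (integrableOn_Ioc_zero_one_of_le hgm hc.le hr hg0 hle)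
    (integrableOn_Ioc_zero_one_of_le (by fun_prop) hc.le hr hm0 hmψ)
    (integrableOn_Ioc_zero_one_rpow_of_le (by fun_prop) hc.le (by linarith) hrq hm0 hmψ)
    (integrableOn_Ioc_zero_one_rpow_of_le hgm hc.le (by linarith) hrq hg0 hle)
    (hm.trans_le hint)

end RpowBound

theorem stmt_5 (p q : ℝ) (hq : 1 < q) (hqp : q < p)
    (f : ℝ) (hf0 : (p - 1) / p < f) (hf1 : f ≤ 1)
    (g : ℝ → ℝ) (hgm : Measurable g)
    (hg0 : ∀ t ∈ Set.Ioc (0:ℝ) 1, 0 ≤ g t)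
    (hle : ∀ t ∈ Set.Ioc (0:ℝ) 1, g t ≤ ((p - 1) / p) * t ^ (-(1:ℝ)/p))
    (hf : ∫ t in Set.Ioc (0:ℝ) 1, g t = f) :
    ((p - 1) / p) ^ q * (1 / (p - q)) *
        (p - q * (p * (1 - f)) ^ ((p - q) / (p - 1))) ≤
      ∫ t in Set.Ioc (0:ℝ) 1, (g t) ^ q := by
  have hp0 : 0 < p := by linarith
  have hp1 : 0 < p - 1 := by linarith
  have hpq : 0 < p - q := by linarith
  have hc : 0 < (p - 1) / p := div_pos hp1 hp0
  have hr1 : -(1:ℝ) / p + 1 = (p - 1) / p := by field_simp; ring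
  have hrq1 : -(1:ℝ) / p * q + 1 = (p - q) / p := by field_simp; ring
  have hr : -1 < -(1:ℝ) / p := by linarith
  have hrq : -1 < -(1:ℝ) / p * q := by linarith [div_pos hpq hp0]
  rcases hf1.eq_or_lt with rfl | hf1
  · rw [integral_rpow_eq_of_le_mul_rpow_of_integral_eq hgm hc.le hr hrq hg0 hle
      (by rw [hf, hr1, div_self hc.ne']), hrq1, sub_self, mul_zero, zero_rpow (by positivity),
      mul_zero, sub_zero]
    apply le_of_eq
    field_simp
  · set X := p * (1 - f) with hX
    have hX0 : 0 < X := mul_pos hp0 (by linarith)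
    have hX1 : X < 1 := by
      rw [div_lt_iff₀ hp0] at hf0
      linarith
    have hXpow (e : ℝ) : (X ^ (p / (p - 1))) ^ ((p - e) / p) = X ^ ((p - e) / (p - 1)) := by
      rw [← rpow_mul hX0.le]
      congr 1
      field_simp
    -- `s = X ^ (p / (p - 1))` is the truncation point with `∫ min ψ (ψ s) = f`.
    refine le_trans (le_of_eq ?_) (le_integral_rpow_of_le_mul_rpow hgm hc hr
      (div_nonpos_of_nonpos_of_nonneg (by norm_num) hp0.le) hq.le hrq
      (rpow_pos_of_pos hX0 (p / (p - 1))) (rpow_le_one hX0.le hX1.le (by positivity)) hg0 hle ?_)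
    · rw [hrq1, hXpow]
      generalize X ^ ((p - q) / (p - 1)) = Y
      field_simp
      ring
    · rw [hf, hr1, hXpow, div_self hp1.ne', rpow_one]
      field_simp
      linarith [hX]
end
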